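/- Assume p ≥ 3, φ₂(s̃_n; W₀) > 0, and n ≥ [200·K_theta·(K_dim + 1)/φ₂²(s̃_n; W₀)]·(max(‖X‖_max², 1))·s₀²·log p. Then for every S ∈ 𝒮_{Θ_n}: (i) ‖F_{n,θ₀}^{1/2}(θ̃*_S − θ₀)‖₂² ≤ 8·K_theta·s₀·log p; and (ii) the matrices V_{n,S} and F_{n,θ*_S} are positive definite and satisfy both λ_max(F_{n,θ*_S}^{−1/2} V_{n,S} F_{n,θ*_S}^{−1/2}) ≤ 2 and λ_max(V_{n,S}^{−1/2} F_{n,θ*_S} V_{n,S}^{−1/2}) ≤ 2. -/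

import Mathlib

open Matrix Real Finset

namespace Stmt4

variable {n p : ℕ}

/-- Linear predictor `x_iᵀθ`. -/
noncomputable def ip (x : Fin n → Fin p → ℝ) (θ : Fin p → ℝ) (i : Fin n) : ℝ :=
  ∑ j, x i j * θ j

/-- Linear predictor for a submodel, `x_{i,S}ᵀθ_S`. -/
noncomputable def ipS (x : Fin n → Fin p → ℝ) (S : Finset (Fin p)) (θs : S → ℝ) (i : Fin n) : ℝ :=
  ∑ j : S, x i j.1 * θs j

/-- `θ̃_S`: the vector `θ_S` padded with zeros outside `S`. -/
def pad (S : Finset (Fin p)) (θs : S → ℝ) : Fin p → ℝ :=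
  fun j => if h : j ∈ S then θs ⟨j, h⟩ else 0

/-- `‖F_{n,θ₀}^{1/2} θ‖₂² = ∑ᵢ b''(x_iᵀθ₀)·(x_iᵀθ)²`. -/
noncomputable def quadF (b : ℝ → ℝ) (x : Fin n → Fin p → ℝ) (θ₀ θ : Fin p → ℝ) : ℝ :=
  ∑ i, deriv (deriv b) (ip x θ₀ i) * (ip x θ i) ^ 2

/-- The matrix `V_{n,S} = ∑ᵢ b''(x_iᵀθ₀)·x_{i,S} x_{i,S}ᵀ`. -/
noncomputable def Vmat (b : ℝ → ℝ) (x : Fin n → Fin p → ℝ) (θ₀ : Fin p → ℝ)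
    (S : Finset (Fin p)) : Matrix S S ℝ :=
  Matrix.of fun j k => ∑ i, deriv (deriv b) (ip x θ₀ i) * x i j.1 * x i k.1

/-- The Fisher matrix `F_{n,θ_S} = ∑ᵢ b''(x_{i,S}ᵀθ_S)·x_{i,S} x_{i,S}ᵀ`. -/
noncomputable def Fmat (b : ℝ → ℝ) (x : Fin n → Fin p → ℝ) (S : Finset (Fin p))
    (θs : S → ℝ) : Matrix S S ℝ :=
  Matrix.of fun j k => ∑ i, deriv (deriv b) (ipS x S θs i) * x i j.1 * x i k.1

/-- Sparse singular value `φ₂²(s; W₀)`, with real sparsity level `s`. -/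
noncomputable def phi2sq (b : ℝ → ℝ) (x : Fin n → Fin p → ℝ) (θ₀ : Fin p → ℝ) (s : ℝ) : ℝ :=
  sInf {r : ℝ | ∃ θ : Fin p → ℝ, θ ≠ 0 ∧
    ((Finset.univ.filter fun j => θ j ≠ 0).card : ℝ) ≤ s ∧
    r = quadF b x θ₀ θ / ((n : ℝ) * ∑ j, θ j ^ 2)}

/-- `‖X‖_max = max_{i,j} |x_{ij}|`. -/
noncomputable def Xmax (x : Fin n → Fin p → ℝ) : ℝ :=
  ⨆ i : Fin n, ⨆ j : Fin p, |x i j|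

/-- Largest eigenvalue of a symmetric real matrix (Rayleigh quotient supremum). -/
noncomputable def lamMax {m : Type*} [Fintype m] (A : Matrix m m ℝ) : ℝ :=
  sSup {r : ℝ | ∃ u : m → ℝ, (∑ i, u i ^ 2) = 1 ∧ r = u ⬝ᵥ A.mulVec u}

/-- The expected log-likelihood of the submodel `S`. -/
noncomputable def elik (b : ℝ → ℝ) (x : Fin n → Fin p → ℝ) (θ₀ : Fin p → ℝ)
    (S : Finset (Fin p)) (θs : S → ℝ) : ℝ :=
  ∑ i, (deriv b (ip x θ₀ i) * ipS x S θs i - b (ipS x S θs i))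

/-- Membership in `𝒮_{Θ_n}`. -/
noncomputable def inSTheta (b : ℝ → ℝ) (x : Fin n → Fin p → ℝ) (θ₀ : Fin p → ℝ)
    (Kdim Ktheta : ℝ) (S : Finset (Fin p)) : Prop :=
  S.Nonempty ∧
  (S.card : ℝ) ≤ Kdim * ((Finset.univ.filter fun j => θ₀ j ≠ 0).card : ℝ) ∧
  ∃ θs : S → ℝ, quadF b x θ₀ (fun j => pad S θs j - θ₀ j)
    ≤ Ktheta * ((Finset.univ.filter fun j => θ₀ j ≠ 0).card : ℝ) * Real.log p

end Stmt4

open Stmt4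

/-!
Write `r = K_theta·s₀·log p`. For `θ_S` with `‖F_{n,θ₀}^{1/2}(θ̃_S − θ₀)‖₂² ≤ 8r`, the restricted
eigenvalue `φ₂²` and the sample-size condition give the uniform bound
`|x_{i,S}ᵀθ_S − x_iᵀθ₀| ≤ 1/5`, and then the ratio bound on `b''` makes `b''` vary by a factor
at most `e^{3/5} ≤ 2`. On that ellipsoid the Bregman divergence
`D(θ_S) = ∑ᵢ D_b(x_iᵀθ₀, x_{i,S}ᵀθ_S)` lies between a quarter of the quadratic form and the whole
quadratic form. The maximizer `θ*_S` minimizes the convex function `D`. If it left the ellipsoid,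
the segment from a point `w` with quadratic form at most `r` would cross the boundary at a point
where `D ≥ 2r > r ≥ D(w)`, contradicting convexity. Inside the ellipsoid the weights
`b''(x_{i,S}ᵀθ*_S)` and `b''(x_iᵀθ₀)` agree up to a factor 2, which gives `F ≤ 2V` and `V ≤ 2F`.
-/

namespace Stmt4

open Set

section Cumulant

variable {b : ℝ → ℝ}

noncomputable def bregman (b : ℝ → ℝ) (η₀ η : ℝ) : ℝ :=
  b η - b η₀ - deriv b η₀ * (η - η₀)

theorem exists_bregman_eq (hb : ContDiff ℝ 2 b) (η₀ η : ℝ) :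
    ∃ d, |d - η₀| ≤ |η - η₀| ∧ bregman b η₀ η = deriv (deriv b) d * (η - η₀) ^ 2 / 2 := by
  rcases eq_or_ne η₀ η with rfl | hne
  · exact ⟨η₀, by simp, by simp [bregman]⟩
  obtain ⟨d, hd, hdeq⟩ :=
    taylor_mean_remainder_lagrange_iteratedDeriv (n := 1) hne hb.contDiffOn
  have hderiv : derivWithin b (uIcc η₀ η) η₀ = deriv b η₀ :=
    (hb.differentiable (by norm_num) η₀).derivWithin (uniqueDiffOn_uIcc hne η₀ left_mem_uIcc)
  simp only [taylorWithinEval_succ, taylor_within_zero_eval, iteratedDeriv_succ,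
    iteratedDeriv_zero] at hdeq
  norm_num [hderiv] at hdeq
  refine ⟨d, abs_sub_left_of_mem_uIcc (uIoo_subset_uIcc_self hd), ?_⟩
  rw [bregman, ← hdeq]
  ring

theorem deriv2_nonneg (hb : Differentiable ℝ b) (hconv : ConvexOn ℝ univ b) (η : ℝ) :
    0 ≤ deriv (deriv b) η :=
  (monotoneOn_univ.mp (hconv.monotoneOn_deriv fun x _ => hb x)).deriv_nonneg

theorem deriv2_le_two_mul (hb'' : ∀ η, 0 ≤ deriv (deriv b) η)
    (hbratio : ∀ η₁ η₂, deriv (deriv b) η₁ ≤ exp (3 * |η₁ - η₂|) * deriv (deriv b) η₂) :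
    ∀ η₁ η₂, |η₁ - η₂| ≤ 1 / 5 → deriv (deriv b) η₁ ≤ 2 * deriv (deriv b) η₂ := by
  intro η₁ η₂ h
  have hexp : exp (3 * |η₁ - η₂|) ≤ 2 :=
    calc exp (3 * |η₁ - η₂|) ≤ exp (log 2) := exp_le_exp.mpr (by linarith [log_two_gt_d9])
      _ = 2 := exp_log two_pos
  exact (hbratio η₁ η₂).trans (mul_le_mul_of_nonneg_right hexp (hb'' η₂))

theorem bregman_mem_Icc (hb : ContDiff ℝ 2 b) {δ κ : ℝ} (hκ : 0 < κ)
    (hratio : ∀ η₁ η₂, |η₁ - η₂| ≤ δ → deriv (deriv b) η₁ ≤ κ * deriv (deriv b) η₂)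
    {η₀ η : ℝ} (h : |η - η₀| ≤ δ) :
    bregman b η₀ η ∈ Set.Icc (deriv (deriv b) η₀ * (η - η₀) ^ 2 / (2 * κ))
      (κ * deriv (deriv b) η₀ * (η - η₀) ^ 2 / 2) := by
  obtain ⟨d, hd, heq⟩ := exists_bregman_eq hb η₀ η
  have hlow := mul_le_mul_of_nonneg_right
    (hratio η₀ d (by rw [abs_sub_comm]; exact hd.trans h)) (sq_nonneg (η - η₀))
  have hup := mul_le_mul_of_nonneg_right (hratio d η₀ (hd.trans h)) (sq_nonneg (η - η₀))
  rw [heq, Set.mem_Icc, div_le_div_iff₀ (by positivity) two_pos]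
  constructor <;> nlinarith

end Cumulant

theorem le_of_convexOn_of_lt_on_levelSet {E : Type*} [AddCommGroup E] [Module ℝ E]
    [TopologicalSpace E] [IsTopologicalAddGroup E] [ContinuousSMul ℝ E] {Q B : E → ℝ}
    (hQ : Continuous Q) (hB : ConvexOn ℝ univ B) {R c : ℝ} (hlevel : ∀ z, Q z = R → c < B z)
    {w θ : E} (hw : Q w ≤ R) (hBw : B w ≤ c) (hθ : B θ ≤ B w) : Q θ ≤ R := by
  by_contra! hR
  have hcont : ContinuousOn (fun t : ℝ => Q (w + t • (θ - w))) (Icc 0 1) := by fun_prop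
  obtain ⟨t, ht, hQt⟩ := intermediate_value_Icc zero_le_one hcont
    ⟨by simpa using hw, by simpa using hR.le⟩
  have hseg : B (w + t • (θ - w)) ≤ max (B w) (B θ) :=
    hB.le_on_segment (mem_univ _) (mem_univ _) (segment_eq_image' ℝ w θ ▸ ⟨t, ht, rfl⟩)
  linarith [hlevel _ hQt, max_eq_left hθ]

theorem lamMax_conj_le {m : Type*} [Fintype m] [DecidableEq m] {A B R : Matrix m m ℝ} {c : ℝ}
    (hc : 0 ≤ c) (hR : R.IsHermitian) (hRBR : R * B * R = 1)
    (hAB : ∀ v, v ⬝ᵥ A *ᵥ v ≤ c * (v ⬝ᵥ B *ᵥ v)) : lamMax (R * A * R) ≤ c := by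
  have hRt : Rᵀ = R := by rw [← conjTranspose_eq_transpose_of_trivial]; exact hR
  have hconj : ∀ (M : Matrix m m ℝ) u, u ⬝ᵥ (R * M * R) *ᵥ u = R *ᵥ u ⬝ᵥ M *ᵥ (R *ᵥ u) := by
    intro M u
    have hsymm : u ᵥ* R = R *ᵥ u := by simpa [hRt] using vecMul_transpose R u
    rw [← mulVec_mulVec, ← mulVec_mulVec, dotProduct_mulVec u R, hsymm]
  refine Real.sSup_le ?_ hc
  rintro _ ⟨u, hu, rfl⟩
  calc u ⬝ᵥ (R * A * R) *ᵥ u ≤ c * (R *ᵥ u ⬝ᵥ B *ᵥ (R *ᵥ u)) := hconj A u ▸ hAB _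
    _ = c := by rw [← hconj, hRBR, one_mulVec]; simp [dotProduct, ← sq, hu]

theorem sum_sq_pos {ι : Type*} [Fintype ι] {θ : ι → ℝ} (hθ : θ ≠ 0) : 0 < ∑ j, θ j ^ 2 := by
  obtain ⟨j, hj⟩ := Function.ne_iff.mp hθ
  exact sum_pos' (fun _ _ => sq_nonneg _) ⟨j, Finset.mem_univ j, pow_two_pos_of_ne_zero hj⟩

variable {n p : ℕ} (x : Fin n → Fin p → ℝ)

section Design

def weightedGram (S : Finset (Fin p)) (w : Fin n → ℝ) : Matrix S S ℝ :=
  of fun j k => ∑ i, w i * x i j.1 * x i k.1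

variable {S : Finset (Fin p)} {w w' : Fin n → ℝ}

theorem weightedGram_isHermitian : (weightedGram x S w).IsHermitian := by
  ext j k
  simp only [conjTranspose_apply, weightedGram, of_apply, star_trivial]
  exact sum_congr rfl fun i _ => by ring

theorem dotProduct_weightedGram_mulVec (u : S → ℝ) :
    u ⬝ᵥ weightedGram x S w *ᵥ u = ∑ i, w i * ipS x S u i ^ 2 := by
  simp only [dotProduct, mulVec, weightedGram, of_apply, ipS, sq, sum_mul, mul_sum]
  refine (sum_congr rfl fun j _ => sum_comm).trans (sum_comm.trans ?_)
  exact sum_congr rfl fun i _ => sum_congr rfl fun j _ => sum_congr rfl fun k _ => by ring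

theorem dotProduct_weightedGram_mulVec_le {c : ℝ} (h : ∀ i, w i ≤ c * w' i) (u : S → ℝ) :
    u ⬝ᵥ weightedGram x S w *ᵥ u ≤ c * (u ⬝ᵥ weightedGram x S w' *ᵥ u) := by
  rw [dotProduct_weightedGram_mulVec, dotProduct_weightedGram_mulVec, mul_sum]
  exact sum_le_sum fun i _ => by
    linarith [mul_le_mul_of_nonneg_right (h i) (sq_nonneg (ipS x S u i))]

theorem posDef_weightedGram_of_le {c : ℝ} (hc : 0 ≤ c) (h : ∀ i, w' i ≤ c * w i)
    (hpos : (weightedGram x S w').PosDef) : (weightedGram x S w).PosDef :=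
  PosDef.of_dotProduct_mulVec_pos (weightedGram_isHermitian x) fun _ hu =>
    pos_of_mul_pos_right ((hpos.dotProduct_mulVec_pos hu).trans_le
      (dotProduct_weightedGram_mulVec_le x h _)) hc

theorem ip_pad (θs : S → ℝ) (i : Fin n) : ip x (pad S θs) i = ipS x S θs i := by
  rw [ip, ipS, ← sum_subset (subset_univ S) fun j _ hj => by simp [pad, hj],
    ← sum_attach S]
  exact sum_congr rfl fun j _ => by simp [pad, j.2]

theorem ip_sub (θ θ' : Fin p → ℝ) (i : Fin n) :
    ip x (fun j => θ j - θ' j) i = ip x θ i - ip x θ' i := by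
  simp only [ip, mul_sub, sum_sub_distrib]

theorem ipS_add_smul (u v : S → ℝ) (a c : ℝ) (i : Fin n) :
    ipS x S (a • u + c • v) i = a * ipS x S u i + c * ipS x S v i := by
  simp only [ipS, Pi.add_apply, Pi.smul_apply, smul_eq_mul, mul_sum, ← sum_add_distrib]
  exact sum_congr rfl fun j _ => by ring

theorem card_support_pad_le (u : S → ℝ) :
    (univ.filter fun j => pad S u j ≠ 0).card ≤ S.card :=
  card_le_card fun j hj => by
    by_contra hjS
    simp [pad, hjS] at hj

theorem card_support_pad_sub_le (θ₀ : Fin p → ℝ) (θs : S → ℝ) :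
    (univ.filter fun j => pad S θs j - θ₀ j ≠ 0).card
      ≤ S.card + (univ.filter fun j => θ₀ j ≠ 0).card := by
  refine (card_le_card fun j hj => ?_).trans (card_union_le _ _)
  simp only [mem_filter, Finset.mem_univ, true_and, Finset.mem_union] at hj ⊢
  by_contra! hj'
  exact hj (by simp [pad, hj'.1, hj'.2])

theorem abs_le_Xmax (i : Fin n) (j : Fin p) : |x i j| ≤ Xmax x :=
  (le_ciSup (Set.finite_range _).bddAbove j).trans
    (le_ciSup (f := fun i => ⨆ j, |x i j|) (Set.finite_range _).bddAbove i)

theorem sq_ip_le (θ : Fin p → ℝ) (i : Fin n) :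
    ip x θ i ^ 2 ≤ Xmax x ^ 2 * (univ.filter fun j => θ j ≠ 0).card * ∑ j, θ j ^ 2 := by
  set T := univ.filter fun j => θ j ≠ 0
  have hT : ip x θ i = ∑ j ∈ T, x i j * θ j :=
    (sum_filter_of_ne fun j _ h => right_ne_zero_of_mul h).symm
  have hterm : ∀ j, (x i j * θ j) ^ 2 ≤ Xmax x ^ 2 * θ j ^ 2 := fun j => by
    rw [mul_pow, ← sq_abs (x i j)]
    gcongr
    exact abs_le_Xmax x i j
  calc ip x θ i ^ 2 ≤ T.card * ∑ j ∈ T, (x i j * θ j) ^ 2 := hT ▸ sq_sum_le_card_mul_sum_sq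
    _ ≤ T.card * ∑ j, Xmax x ^ 2 * θ j ^ 2 := by
      gcongr
      exact (sum_le_sum fun j _ => hterm j).trans
        (sum_le_sum_of_subset_of_nonneg (subset_univ T) fun j _ _ => by positivity)
    _ = Xmax x ^ 2 * T.card * ∑ j, θ j ^ 2 := by rw [← mul_sum]; ring

end Design

section Model

variable {b : ℝ → ℝ} {θ₀ : Fin p → ℝ} {S : Finset (Fin p)}

theorem quadF_nonneg (hb'' : ∀ η, 0 ≤ deriv (deriv b) η) (θ : Fin p → ℝ) :
    0 ≤ quadF b x θ₀ θ :=
  sum_nonneg fun _ _ => mul_nonneg (hb'' _) (sq_nonneg _)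

theorem phi2sq_nonneg (hb'' : ∀ η, 0 ≤ deriv (deriv b) η) (s : ℝ) : 0 ≤ phi2sq b x θ₀ s :=
  Real.sInf_nonneg fun _ ⟨θ, _, _, hr⟩ => hr ▸ div_nonneg (quadF_nonneg x hb'' θ) (by positivity)

theorem mul_phi2sq_mul_le_quadF (hb'' : ∀ η, 0 ≤ deriv (deriv b) η) {s : ℝ} {θ : Fin p → ℝ}
    (hθ : θ ≠ 0) (hcard : ((univ.filter fun j => θ j ≠ 0).card : ℝ) ≤ s) :
    n * phi2sq b x θ₀ s * ∑ j, θ j ^ 2 ≤ quadF b x θ₀ θ := by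
  rcases Nat.eq_zero_or_pos n with rfl | hn
  · simpa using quadF_nonneg x hb'' θ
  have hden : 0 < (n : ℝ) * ∑ j, θ j ^ 2 := mul_pos (by exact_mod_cast hn) (sum_sq_pos hθ)
  have hle : phi2sq b x θ₀ s ≤ quadF b x θ₀ θ / (n * ∑ j, θ j ^ 2) :=
    csInf_le ⟨0, fun _ ⟨θ', _, _, hr⟩ => hr ▸ div_nonneg (quadF_nonneg x hb'' θ') (by positivity)⟩
      ⟨θ, hθ, hcard, rfl⟩
  rw [le_div_iff₀ hden] at hle
  linarith

theorem mul_phi2sq_mul_sq_ip_le (hb'' : ∀ η, 0 ≤ deriv (deriv b) η) {s : ℝ} {θ : Fin p → ℝ}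
    (hcard : ((univ.filter fun j => θ j ≠ 0).card : ℝ) ≤ s) (i : Fin n) :
    n * phi2sq b x θ₀ s * ip x θ i ^ 2 ≤ Xmax x ^ 2 * s * quadF b x θ₀ θ := by
  rcases eq_or_ne θ 0 with rfl | hθ
  · simp [ip, quadF]
  have hnφ : 0 ≤ (n : ℝ) * phi2sq b x θ₀ s := mul_nonneg n.cast_nonneg (phi2sq_nonneg x hb'' s)
  calc n * phi2sq b x θ₀ s * ip x θ i ^ 2
      ≤ n * phi2sq b x θ₀ s * (Xmax x ^ 2 * s * ∑ j, θ j ^ 2) := by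
        gcongr
        exact (sq_ip_le x θ i).trans (by gcongr)
    _ = Xmax x ^ 2 * s * (n * phi2sq b x θ₀ s * ∑ j, θ j ^ 2) := by ring
    _ ≤ Xmax x ^ 2 * s * quadF b x θ₀ θ := by
        have hs : 0 ≤ s := (Nat.cast_nonneg _).trans hcard
        gcongr
        exact mul_phi2sq_mul_le_quadF x hb'' hθ hcard

theorem quadF_pad (u : S → ℝ) : quadF b x θ₀ (pad S u) = u ⬝ᵥ Vmat b x θ₀ S *ᵥ u := by
  simp only [quadF, ip_pad]
  exact (dotProduct_weightedGram_mulVec x u).symm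

theorem quadF_pad_sub (θs : S → ℝ) :
    quadF b x θ₀ (fun j => pad S θs j - θ₀ j)
      = ∑ i, deriv (deriv b) (ip x θ₀ i) * (ipS x S θs i - ip x θ₀ i) ^ 2 := by
  simp only [quadF, ip_sub, ip_pad]

theorem continuous_quadF_pad_sub :
    Continuous fun θs : S → ℝ => quadF b x θ₀ (fun j => pad S θs j - θ₀ j) := by
  simp only [quadF_pad_sub, ipS]
  fun_prop

theorem posDef_Vmat (hn : 0 < n) (hb'' : ∀ η, 0 ≤ deriv (deriv b) η) {s : ℝ}
    (hφ : 0 < phi2sq b x θ₀ s) (hS : (S.card : ℝ) ≤ s) : (Vmat b x θ₀ S).PosDef :=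
  PosDef.of_dotProduct_mulVec_pos (weightedGram_isHermitian x) fun u hu => by
    obtain ⟨j, hj⟩ := Function.ne_iff.mp hu
    have hpad : pad S u ≠ 0 := Function.ne_iff.mpr ⟨j, by simpa [pad] using hj⟩
    have hn' : (0 : ℝ) < n := by exact_mod_cast hn
    have hsum := sum_sq_pos hpad
    rw [star_trivial, ← quadF_pad]
    calc 0 < n * phi2sq b x θ₀ s * ∑ k, pad S u k ^ 2 := by positivity
      _ ≤ _ := mul_phi2sq_mul_le_quadF x hb'' hpad
        ((Nat.cast_le.mpr (card_support_pad_le u)).trans hS)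

variable (b θ₀ S) in
noncomputable def divergence (θs : S → ℝ) : ℝ :=
  ∑ i, bregman b (ip x θ₀ i) (ipS x S θs i)

theorem elik_add_divergence (θs : S → ℝ) :
    elik b x θ₀ S θs + divergence x b θ₀ S θs
      = ∑ i, (deriv b (ip x θ₀ i) * ip x θ₀ i - b (ip x θ₀ i)) := by
  rw [elik, divergence, ← sum_add_distrib]
  exact sum_congr rfl fun i _ => by rw [bregman]; ring

theorem convexOn_divergence (hconv : ConvexOn ℝ univ b) :
    ConvexOn ℝ univ (divergence x b θ₀ S) := by
  refine ⟨convex_univ, fun u _ v _ a c ha hc hac => ?_⟩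
  simp only [divergence, bregman, ipS_add_smul, smul_eq_mul, mul_sum, ← sum_add_distrib]
  refine sum_le_sum fun i _ => ?_
  have hb := hconv.2 (mem_univ (ipS x S u i)) (mem_univ (ipS x S v i)) ha hc hac
  simp only [smul_eq_mul] at hb
  obtain rfl : c = 1 - a := by linarith
  linarith

theorem divergence_mem_Icc (hb : ContDiff ℝ 2 b)
    (hratio : ∀ η₁ η₂, |η₁ - η₂| ≤ 1 / 5 → deriv (deriv b) η₁ ≤ 2 * deriv (deriv b) η₂)
    {θs : S → ℝ} (hδ : ∀ i, |ipS x S θs i - ip x θ₀ i| ≤ 1 / 5) :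
    divergence x b θ₀ S θs ∈ Set.Icc (quadF b x θ₀ (fun j => pad S θs j - θ₀ j) / 4)
      (quadF b x θ₀ (fun j => pad S θs j - θ₀ j)) := by
  have h := fun i => bregman_mem_Icc hb two_pos hratio (hδ i)
  rw [quadF_pad_sub, sum_div]
  exact ⟨sum_le_sum fun i _ => by linarith [(h i).1], sum_le_sum fun i _ => by linarith [(h i).2]⟩

theorem abs_ipS_sub_ip_le_of_quadF_le (hb'' : ∀ η, 0 ≤ deriv (deriv b) η) {s r : ℝ}
    (hcard : (S.card : ℝ) + (univ.filter fun j => θ₀ j ≠ 0).card ≤ s)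
    (hnφ : 0 < n * phi2sq b x θ₀ s) (hkey : 25 * Xmax x ^ 2 * s * r ≤ n * phi2sq b x θ₀ s)
    {θs : S → ℝ} (hq : quadF b x θ₀ (fun j => pad S θs j - θ₀ j) ≤ r) (i : Fin n) :
    |ipS x S θs i - ip x θ₀ i| ≤ 1 / 5 := by
  have hcard' : ((univ.filter fun j => pad S θs j - θ₀ j ≠ 0).card : ℝ) ≤ s :=
    le_trans (by exact_mod_cast card_support_pad_sub_le θ₀ θs) hcard
  have h := mul_phi2sq_mul_sq_ip_le x (θ₀ := θ₀) hb'' hcard' i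
  rw [ip_sub, ip_pad] at h
  have hs : 0 ≤ Xmax x ^ 2 * s := by have := (Nat.cast_nonneg _).trans hcard'; positivity
  refine abs_le_of_sq_le_sq (le_of_mul_le_mul_left ?_ hnφ) (by norm_num)
  linarith [mul_le_mul_of_nonneg_left hq hs]

theorem quadF_pad_sub_le_of_elik_le (hb : ContDiff ℝ 2 b) (hconv : ConvexOn ℝ univ b)
    (hratio : ∀ η₁ η₂, |η₁ - η₂| ≤ 1 / 5 → deriv (deriv b) η₁ ≤ 2 * deriv (deriv b) η₂)
    {r : ℝ} (hr : 0 < r)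
    (hlocal : ∀ θs : S → ℝ, quadF b x θ₀ (fun j => pad S θs j - θ₀ j) ≤ 8 * r →
      ∀ i, |ipS x S θs i - ip x θ₀ i| ≤ 1 / 5)
    {w θs : S → ℝ} (hw : quadF b x θ₀ (fun j => pad S w j - θ₀ j) ≤ r)
    (hθs : elik b x θ₀ S w ≤ elik b x θ₀ S θs) :
    quadF b x θ₀ (fun j => pad S θs j - θ₀ j) ≤ 8 * r := by
  have hD := fun θs h => divergence_mem_Icc x hb hratio (hlocal θs h)
  refine le_of_convexOn_of_lt_on_levelSet (continuous_quadF_pad_sub x)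
    (convexOn_divergence x (θ₀ := θ₀) hconv) (c := r) (fun z hz => ?_) (by linarith) ?_ ?_
  · linarith [(hD z hz.le).1]
  · linarith [(hD w (by linarith)).2]
  · linarith [elik_add_divergence x (b := b) (θ₀ := θ₀) w,
      elik_add_divergence x (b := b) (θ₀ := θ₀) θs]

theorem posDef_Fmat_and_lamMax_le_two
    (hratio : ∀ η₁ η₂, |η₁ - η₂| ≤ 1 / 5 → deriv (deriv b) η₁ ≤ 2 * deriv (deriv b) η₂)
    {θs : S → ℝ} (hδ : ∀ i, |ipS x S θs i - ip x θ₀ i| ≤ 1 / 5) (hV : (Vmat b x θ₀ S).PosDef) :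
    (Fmat b x S θs).PosDef ∧
      (∀ RF : Matrix S S ℝ, RF.PosSemidef → RF * Fmat b x S θs * RF = 1 →
        lamMax (RF * Vmat b x θ₀ S * RF) ≤ 2) ∧
      (∀ RV : Matrix S S ℝ, RV.PosSemidef → RV * Vmat b x θ₀ S * RV = 1 →
        lamMax (RV * Fmat b x S θs * RV) ≤ 2) := by
  have hδ' i : |ip x θ₀ i - ipS x S θs i| ≤ 1 / 5 := (abs_sub_comm _ _).trans_le (hδ i)
  have hFV : ∀ u, u ⬝ᵥ Fmat b x S θs *ᵥ u ≤ 2 * (u ⬝ᵥ Vmat b x θ₀ S *ᵥ u) :=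
    dotProduct_weightedGram_mulVec_le x fun i => hratio _ _ (hδ i)
  have hVF : ∀ u, u ⬝ᵥ Vmat b x θ₀ S *ᵥ u ≤ 2 * (u ⬝ᵥ Fmat b x S θs *ᵥ u) :=
    dotProduct_weightedGram_mulVec_le x fun i => hratio _ _ (hδ' i)
  exact ⟨posDef_weightedGram_of_le x two_pos.le (fun i => hratio _ _ (hδ' i)) hV,
    fun RF hRF h => lamMax_conj_le two_pos.le hRF.1 h hVF,
    fun RV hRV h => lamMax_conj_le two_pos.le hRV.1 h hFV⟩

end Model

end Stmt4

/-- The inverse square roots `F^{-1/2}`, `V^{-1/2}` are encoded as the positive semidefinite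
matrices `RF`, `RV` with `RF·F·RF = 1`, `RV·V·RV = 1`. -/
theorem stmt_4_general
    (n p : ℕ) (hn : 1 ≤ n) (hp : 3 ≤ p)
    (x : Fin n → Fin p → ℝ) (θ₀ : Fin p → ℝ) (hθ₀ : θ₀ ≠ 0)
    -- the cumulant function
    (b : ℝ → ℝ) (hb3 : ContDiff ℝ 3 b) (hbconv : StrictConvexOn ℝ Set.univ b)
    (hbratio : ∀ η₁ η₂, deriv (deriv b) η₁ ≤ Real.exp (3 * |η₁ - η₂|) * deriv (deriv b) η₂)
    -- the constants
    (Kdim Ktheta : ℝ) (hKtheta : 0 < Ktheta)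
    -- `s₀ = |S₀|`
    (s₀ : ℕ) (hs₀ : s₀ = (Finset.univ.filter fun j => θ₀ j ≠ 0).card)
    -- the maximizers `θ*_S`
    (θstar : (S : Finset (Fin p)) → (S → ℝ))
    (hθstar : ∀ S : Finset (Fin p), inSTheta b x θ₀ Kdim Ktheta S →
      ∀ θs : S → ℝ, elik b x θ₀ S θs ≤ elik b x θ₀ S (θstar S))
    -- `φ₂(s̃_n ; W₀) > 0` and the sample-size condition
    (hphi : 0 < phi2sq b x θ₀ ((Kdim + 1) * (s₀ : ℝ)))
    (hsample : 200 * Ktheta * (Kdim + 1) / phi2sq b x θ₀ ((Kdim + 1) * (s₀ : ℝ)) *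
        max (Xmax x ^ 2) 1 * (s₀ : ℝ) ^ 2 * Real.log p ≤ (n : ℝ)) :
    ∀ S : Finset (Fin p), inSTheta b x θ₀ Kdim Ktheta S →
      (quadF b x θ₀ (fun j => pad S (θstar S) j - θ₀ j)
          ≤ 8 * Ktheta * (s₀ : ℝ) * Real.log p) ∧
      (Vmat b x θ₀ S).PosDef ∧ (Fmat b x S (θstar S)).PosDef ∧
      (∀ RF : Matrix S S ℝ, RF.PosSemidef → RF * Fmat b x S (θstar S) * RF = 1 →
        lamMax (RF * Vmat b x θ₀ S * RF) ≤ 2) ∧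
      (∀ RV : Matrix S S ℝ, RV.PosSemidef → RV * Vmat b x θ₀ S * RV = 1 →
        lamMax (RV * Fmat b x S (θstar S) * RV) ≤ 2) := by
  intro S hS
  obtain ⟨-, hScard, w, hw⟩ := id hS
  rw [← hs₀] at hScard hw
  have hb2 : ContDiff ℝ 2 b := hb3.of_le (by norm_num)
  have hb'' := deriv2_nonneg (hb2.differentiable (by norm_num)) hbconv.convexOn
  have hratio := deriv2_le_two_mul hb'' hbratio
  set φ := phi2sq b x θ₀ ((Kdim + 1) * s₀)
  set r := Ktheta * s₀ * log p
  have hr : 0 < r := by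
    obtain ⟨j, hj⟩ := Function.ne_iff.mp hθ₀
    have : (0 : ℝ) < s₀ := by exact_mod_cast hs₀ ▸ card_pos.mpr ⟨j, by simpa using hj⟩
    have := log_pos (by exact_mod_cast (by omega : 1 < p) : (1 : ℝ) < p)
    positivity
  have hs : 0 ≤ (Kdim + 1) * s₀ := by
    linarith [S.card.cast_nonneg (α := ℝ), s₀.cast_nonneg (α := ℝ)]
  have hkey : 25 * Xmax x ^ 2 * ((Kdim + 1) * s₀) * (8 * r) ≤ n * φ := by
    have hM := mul_le_mul_of_nonneg_left (le_max_left (Xmax x ^ 2) 1) (mul_nonneg hs hr.le)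
    have := mul_le_mul_of_nonneg_right hsample hphi.le
    field_simp at this
    linarith
  have hlocal : ∀ θs : S → ℝ, quadF b x θ₀ (fun j => pad S θs j - θ₀ j) ≤ 8 * r →
      ∀ i, |ipS x S θs i - ip x θ₀ i| ≤ 1 / 5 := fun _ =>
    abs_ipS_sub_ip_le_of_quadF_le x hb'' (by rw [← hs₀]; linarith)
      (mul_pos (by exact_mod_cast hn) hphi) hkey
  have hstar := quadF_pad_sub_le_of_elik_le x hb2 hbconv.convexOn hratio hr hlocal
    (by linarith) (hθstar S hS w)
  have hV := posDef_Vmat x hn hb'' hphi (by linarith : (S.card : ℝ) ≤ (Kdim + 1) * s₀)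
  exact ⟨by linarith, hV, posDef_Fmat_and_lamMax_le_two x hratio (hlocal _ hstar) hV⟩

/-- misspecification on `𝒮_{Θ_n}`.  The inverse square roots
`F^{-1/2}`, `V^{-1/2}` are encoded as the (unique) positive semidefinite matrices `RF`, `RV`
with `RF·F·RF = 1`, `RV·V·RV = 1`. -/
theorem stmt_4
    (n p : ℕ) (hn : 1 ≤ n) (hp : 3 ≤ p)
    (x : Fin n → Fin p → ℝ) (θ₀ : Fin p → ℝ) (hθ₀ : θ₀ ≠ 0)
    -- the cumulant function
    (b : ℝ → ℝ) (hb3 : ContDiff ℝ 3 b) (hbconv : StrictConvexOn ℝ Set.univ b)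
    (hb3bound : ∀ η, |deriv (deriv (deriv b)) η| ≤ deriv (deriv b) η)
    (hbratio : ∀ η₁ η₂, deriv (deriv b) η₁ ≤ Real.exp (3 * |η₁ - η₂|) * deriv (deriv b) η₂)
    -- the constants
    (Kdim Ktheta : ℝ) (hKdim : 1 < Kdim) (hKtheta : 0 < Ktheta)
    -- `s₀ = |S₀|`
    (s₀ : ℕ) (hs₀ : s₀ = (Finset.univ.filter fun j => θ₀ j ≠ 0).card)
    -- the maximizers `θ*_S`
    (θstar : (S : Finset (Fin p)) → (S → ℝ))
    (hθstar : ∀ S : Finset (Fin p), inSTheta b x θ₀ Kdim Ktheta S →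
      ∀ θs : S → ℝ, elik b x θ₀ S θs ≤ elik b x θ₀ S (θstar S))
    -- `φ₂(s̃_n ; W₀) > 0` and the sample-size condition
    (hphi : 0 < phi2sq b x θ₀ ((Kdim + 1) * (s₀ : ℝ)))
    (hsample : 200 * Ktheta * (Kdim + 1) / phi2sq b x θ₀ ((Kdim + 1) * (s₀ : ℝ)) *
        max (Xmax x ^ 2) 1 * (s₀ : ℝ) ^ 2 * Real.log p ≤ (n : ℝ)) :
    ∀ S : Finset (Fin p), inSTheta b x θ₀ Kdim Ktheta S →
      (quadF b x θ₀ (fun j => pad S (θstar S) j - θ₀ j)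
          ≤ 8 * Ktheta * (s₀ : ℝ) * Real.log p) ∧
      (Vmat b x θ₀ S).PosDef ∧ (Fmat b x S (θstar S)).PosDef ∧
      (∀ RF : Matrix S S ℝ, RF.PosSemidef → RF * Fmat b x S (θstar S) * RF = 1 →
        lamMax (RF * Vmat b x θ₀ S * RF) ≤ 2) ∧
      (∀ RV : Matrix S S ℝ, RV.PosSemidef → RV * Vmat b x θ₀ S * RV = 1 →
        lamMax (RV * Fmat b x S (θstar S) * RV) ≤ 2) :=
  stmt_4_general n p hn hp x θ₀ hθ₀ b hb3 hbconv hbratio Kdim Ktheta hKtheta s₀ hs₀ θstar hθstar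
    hphi hsample
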